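/- arXiv:1212.5401 — 3 statements merged into one kernel-verified Lean document; each statement's English description precedes it below -/
import Mathlib

section
/- For any constant c > 0 and standard normal ζ, sup_{z∈ℝ} |P(cζ ≤ z) - P(ζ ≤ z)| ≤ |1 - c²|. -/
/-!
Write `Φ` for the standard normal cdf and `φ` for its density; the claim is
`|Φ w - Φ (c * w)| ≤ |1 - c ^ 2|` for every `w`. Replacing `(c, w)` by `(c⁻¹, c * w)` reduces
to `c ≤ 1`. Since `w` and `c * w` lie on the same side of `0` and `Φ 0 = 1 / 2`, the difference
is at most `1 / 2`, which settles the case `c + c ^ 2 < 1`. Otherwise, as `φ` decreases in `|x|`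
and `|x| φ x ≤ 1`, the difference is at most `φ (c * w) * (1 - c) * |w| ≤ (1 - c) / c ≤ 1 - c ^ 2`.
-/

open MeasureTheory ProbabilityTheory Set
open scoped NNReal Interval

lemma abs_cdf_sub_cdf (μ : Measure ℝ) [IsProbabilityMeasure μ] (a b : ℝ) :
    |cdf μ b - cdf μ a| = μ.real (Ι a b) := by
  wlog hab : a ≤ b generalizing a b
  · rw [abs_sub_comm, uIoc_comm, this b a (le_of_not_ge hab)]
  rw [abs_of_nonneg (sub_nonneg.2 (monotone_cdf μ hab)), uIoc_of_le hab, ← Iic_sdiff_Iic,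
    measureReal_sdiff (Iic_subset_Iic.2 hab) measurableSet_Iic, cdf_eq_real, cdf_eq_real]

lemma cdf_gaussianReal_zero (v : ℝ≥0) (hv : v ≠ 0) : cdf (gaussianReal 0 v) 0 = 1 / 2 := by
  have : NullSingletonClass (gaussianReal 0 v) := nullSingletonClass_gaussianReal hv
  have hsymm : (gaussianReal 0 v).real (Iic 0) = (gaussianReal 0 v).real (Ioi 0) := by
    conv_lhs => rw [← neg_zero, ← gaussianReal_map_neg]
    rw [map_measureReal_apply (by fun_prop) measurableSet_Iic, neg_zero,
      measureReal_congr Ioi_ae_eq_Ici]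
    congr 1
    ext x
    simp
  have hcompl :=
    probReal_compl_eq_one_sub (μ := gaussianReal 0 v) (measurableSet_Iic (a := (0 : ℝ)))
  rw [compl_Iic, ← hsymm] at hcompl
  rw [cdf_eq_real]
  linarith

lemma gaussianPDFReal_le_of_sq_le {μ : ℝ} {v : ℝ≥0} {x y : ℝ} (h : (x - μ) ^ 2 ≤ (y - μ) ^ 2) :
    gaussianPDFReal μ v y ≤ gaussianPDFReal μ v x := by
  unfold gaussianPDFReal
  gcongr

lemma gaussianPDFReal_mul_abs_le_one (t : ℝ) : gaussianPDFReal 0 1 t * |t| ≤ 1 := by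
  have hpdf : gaussianPDFReal 0 1 t ≤ Real.exp (-(t ^ 2 / 2)) := by
    have : 1 ≤ √(2 * Real.pi) := Real.one_le_sqrt.2 (by linarith [Real.pi_gt_three])
    rw [gaussianPDFReal]
    simp only [NNReal.coe_one, mul_one, sub_zero, neg_div]
    exact mul_le_of_le_one_left (Real.exp_pos _).le (inv_le_one_of_one_le₀ this)
  have habs : |t| ≤ Real.exp (t ^ 2 / 2) := by
    nlinarith [Real.add_one_le_exp (t ^ 2 / 2), sq_abs t, sq_nonneg (|t| - 1)]
  calc gaussianPDFReal 0 1 t * |t| ≤ Real.exp (-(t ^ 2 / 2)) * Real.exp (t ^ 2 / 2) :=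
        mul_le_mul hpdf habs (abs_nonneg t) (Real.exp_pos _).le
    _ = 1 := by rw [← Real.exp_add, neg_add_cancel, Real.exp_zero]

lemma gaussianReal_real_apply (μ : ℝ) {v : ℝ≥0} (hv : v ≠ 0) (s : Set ℝ) :
    (gaussianReal μ v).real s = ∫ x in s, gaussianPDFReal μ v x := by
  rw [measureReal_def, gaussianReal_apply_eq_integral μ hv,
    ENNReal.toReal_ofReal (integral_nonneg fun x => gaussianPDFReal_nonneg μ v x)]

lemma abs_cdf_gaussianReal_sub_le_gaussianPDFReal_mul {μ : ℝ} {v : ℝ≥0} (hv : v ≠ 0) {a b : ℝ}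
    (h : ∀ x ∈ Ι a b, (a - μ) ^ 2 ≤ (x - μ) ^ 2) :
    |cdf (gaussianReal μ v) b - cdf (gaussianReal μ v) a| ≤ gaussianPDFReal μ v a * |b - a| := by
  rw [abs_cdf_sub_cdf, gaussianReal_real_apply μ hv]
  calc ∫ x in Ι a b, gaussianPDFReal μ v x ≤ ∫ _ in Ι a b, gaussianPDFReal μ v a :=
        setIntegral_mono_on (integrable_gaussianPDFReal μ v).integrableOn
          (integrableOn_const measure_Ioc_lt_top.ne) measurableSet_uIoc
          fun x hx => gaussianPDFReal_le_of_sq_le (h x hx)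
    _ = gaussianPDFReal μ v a * |b - a| := by
        rw [setIntegral_const, measureReal_def, Real.volume_uIoc,
          ENNReal.toReal_ofReal (abs_nonneg _), smul_eq_mul, mul_comm]

lemma abs_cdf_gaussianReal_sub_le_half {v : ℝ≥0} (hv : v ≠ 0) {a b : ℝ} (h : 0 ≤ a * b) :
    |cdf (gaussianReal 0 v) b - cdf (gaussianReal 0 v) a| ≤ 1 / 2 := by
  have hmid := cdf_gaussianReal_zero v hv
  have ha0 := cdf_nonneg (gaussianReal 0 v) a
  have hb0 := cdf_nonneg (gaussianReal 0 v) b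
  have ha1 := cdf_le_one (gaussianReal 0 v) a
  have hb1 := cdf_le_one (gaussianReal 0 v) b
  rw [abs_sub_le_iff]
  rcases mul_nonneg_iff.1 h with ⟨ha, hb⟩ | ⟨ha, hb⟩ <;>
  · have := monotone_cdf (gaussianReal 0 v) ha
    have := monotone_cdf (gaussianReal 0 v) hb
    constructor <;> linarith

lemma abs_cdf_gaussianReal_sub_cdf_mul_le_of_le_one {c : ℝ} (hc : 0 < c) (hc1 : c ≤ 1) (w : ℝ) :
    |cdf (gaussianReal 0 1) w - cdf (gaussianReal 0 1) (c * w)| ≤ (1 - c) / c := by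
  have hsq : ∀ x ∈ Ι (c * w) w, (c * w - 0) ^ 2 ≤ (x - 0) ^ 2 := by
    intro x hx
    rw [sub_zero, sub_zero]
    rcases le_total 0 w with hw | hw
    · rw [uIoc_of_le (by nlinarith)] at hx
      nlinarith [hx.1, mul_nonneg hc.le hw]
    · rw [uIoc_of_ge (by nlinarith)] at hx
      nlinarith [hx.2, mul_nonpos_of_nonneg_of_nonpos hc.le hw]
  have hlen : |w - c * w| = |c * w| * ((1 - c) / c) := by
    rw [abs_mul, abs_of_pos hc, show w - c * w = (1 - c) * w by ring, abs_mul,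
      abs_of_nonneg (sub_nonneg.2 hc1)]
    field_simp
  calc _ ≤ gaussianPDFReal 0 1 (c * w) * |w - c * w| :=
        abs_cdf_gaussianReal_sub_le_gaussianPDFReal_mul one_ne_zero hsq
    _ = gaussianPDFReal 0 1 (c * w) * |c * w| * ((1 - c) / c) := by rw [hlen, mul_assoc]
    _ ≤ 1 * ((1 - c) / c) :=
        mul_le_mul_of_nonneg_right (gaussianPDFReal_mul_abs_le_one _)
          (div_nonneg (sub_nonneg.2 hc1) hc.le)
    _ = (1 - c) / c := one_mul _

lemma abs_cdf_gaussianReal_sub_cdf_mul_le {c : ℝ} (hc : 0 < c) (w : ℝ) :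
    |cdf (gaussianReal 0 1) w - cdf (gaussianReal 0 1) (c * w)| ≤ |1 - c ^ 2| := by
  rcases le_total c 1 with hc1 | hc1
  · rw [abs_of_nonneg (a := 1 - c ^ 2) (by nlinarith)]
    by_cases hcc : 1 ≤ c + c ^ 2
    · refine (abs_cdf_gaussianReal_sub_cdf_mul_le_of_le_one hc hc1 w).trans ?_
      rw [div_le_iff₀ hc]
      nlinarith
    · have hsign : 0 ≤ c * w * w := by
        rw [mul_assoc]
        exact mul_nonneg hc.le (mul_self_nonneg w)
      refine (abs_cdf_gaussianReal_sub_le_half one_ne_zero hsign).trans ?_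
      nlinarith
  · have h := abs_cdf_gaussianReal_sub_cdf_mul_le_of_le_one (inv_pos.2 hc)
      (inv_le_one_of_one_le₀ hc1) (c * w)
    rw [inv_mul_cancel_left₀ hc.ne', div_inv_eq_mul, sub_mul, inv_mul_cancel₀ hc.ne'] at h
    rw [abs_sub_comm, abs_of_nonpos (a := 1 - c ^ 2) (by nlinarith)]
    refine h.trans ?_
    nlinarith

/-- For `c > 0` and a standard normal `ζ`,
`sup_z |P(cζ ≤ z) - P(ζ ≤ z)| ≤ |1 - c²|`. -/
theorem stmt_7 {Ω : Type*} [MeasureSpace Ω] [IsProbabilityMeasure (ℙ : Measure Ω)]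
    (ζ : Ω → ℝ) (hζ : Measure.map ζ ℙ = gaussianReal 0 1)
    (c : ℝ) (hc : 0 < c) :
    ⨆ z : ℝ, |(ℙ {ω | c * ζ ω ≤ z}).toReal - (ℙ {ω | ζ ω ≤ z}).toReal| ≤
      |1 - c ^ 2| := by
  have hlaw : HasLaw ζ (gaussianReal 0 1) :=
    ⟨.of_map_ne_zero (hζ ▸ IsProbabilityMeasure.ne_zero _), hζ⟩
  have hcdf (z : ℝ) : (ℙ {ω | ζ ω ≤ z}).toReal = cdf (gaussianReal 0 1) z := by
    rw [hlaw.measure_eq measurableSet_Iic, cdf_eq_real]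
    rfl
  refine Real.iSup_le (fun z => ?_) (abs_nonneg _)
  have hscale : {ω | c * ζ ω ≤ z} = {ω | ζ ω ≤ z / c} := by
    ext ω
    exact (le_div_iff₀' hc).symm
  rw [hscale, hcdf, hcdf]
  simpa only [mul_div_cancel₀ z hc.ne'] using abs_cdf_gaussianReal_sub_cdf_mul_le hc (z / c)
end

section
/- Let U and V be nonnegative random variables, σ > 0, and ζ a standard normal random variable independent of both. Then the Wasserstein distance between the laws of σ√U·ζ and σ√V·ζ is at most σ·√(2/π) times the Wasserstein distance between the laws of √U and √V. -/
/-!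
Integrating out the independent Gaussian factor first, `E h(σ√U ζ) = E G(√U)` with
`G u = E h(σ u ζ)`. For 1-Lipschitz `h`, `|G u - G v| ≤ σ |u - v| E|ζ| = σ √(2/π) |u - v|`,
so `G / (σ √(2/π))` is an admissible test function for the distance between `√U` and `√V`.
-/

open MeasureTheory ProbabilityTheory Real Set
open scoped NNReal

lemma integral_Ioi_mul_exp_neg_mul_sq {b : ℝ} (hb : 0 < b) :
    ∫ x in Ioi 0, x * exp (-b * x ^ 2) = (2 * b)⁻¹ := by
  have h := integral_mul_cexp_neg_mul_sq (b := (b : ℂ)) (by simpa using hb)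
  rw [← Complex.ofReal_inj, ← integral_complex_ofReal]
  push_cast
  exact h

lemma integral_abs_mul_exp_neg_mul_sq {b : ℝ} (hb : 0 < b) :
    ∫ x, |x| * exp (-b * x ^ 2) = b⁻¹ := by
  have h := integral_comp_abs (f := fun x => x * exp (-b * x ^ 2))
  simp only [sq_abs, integral_Ioi_mul_exp_neg_mul_sq hb] at h
  rw [h]
  field_simp

lemma integral_abs_gaussianReal : ∫ x, |x| ∂gaussianReal 0 1 = √(2 / π) := by
  have hpdf (x : ℝ) :
      gaussianPDFReal 0 1 x • |x| = (√(2 * π))⁻¹ * (|x| * exp (-(1 / 2) * x ^ 2)) := by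
    simp only [gaussianPDFReal, smul_eq_mul, NNReal.coe_one, sub_zero, mul_one]
    ring_nf
  rw [integral_gaussianReal_eq_integral_smul one_ne_zero, integral_congr_ae (ae_of_all _ hpdf),
    integral_const_mul, integral_abs_mul_exp_neg_mul_sq one_half_pos,
    show (2 : ℝ) / π = 2 ^ 2 / (2 * π) by field_simp, sqrt_div' _ (by positivity),
    sqrt_sq zero_le_two]
  ring

section Lipschitz

variable {h : ℝ → ℝ} {K : ℝ≥0}

lemma LipschitzWith.integrable_comp {α : Type*} [MeasurableSpace α] {μ : Measure α}
    [IsFiniteMeasure μ] {f : α → ℝ} (hh : LipschitzWith K h) (hf : Integrable f μ) :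
    Integrable (fun x => h (f x)) μ := by
  refine ((integrable_const |h 0|).add (hf.abs.const_mul K)).mono'
    (hh.continuous.comp_aestronglyMeasurable hf.1) (ae_of_all _ fun x => ?_)
  have hx := hh.dist_le_mul (f x) 0
  rw [Real.dist_eq, Real.dist_eq, sub_zero] at hx
  rw [Real.norm_eq_abs, Pi.add_apply]
  linarith [abs_sub_abs_le_abs_sub (h (f x)) (h 0)]

lemma LipschitzWith.integral_comp_mul {μ : Measure ℝ} [IsFiniteMeasure μ]
    (hh : LipschitzWith K h) (hμ : Integrable id μ) :
    LipschitzWith (K * (∫ z, |z| ∂μ).toNNReal) (fun u => ∫ z, h (u * z) ∂μ) := by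
  have hint (a : ℝ) : Integrable (fun z => h (a * z)) μ := hh.integrable_comp (hμ.const_mul a)
  refine LipschitzWith.of_dist_le_mul fun a b => ?_
  rw [Real.dist_eq, Real.dist_eq, ← integral_sub (hint a) (hint b)]
  calc |∫ z, h (a * z) - h (b * z) ∂μ|
      ≤ ∫ z, |h (a * z) - h (b * z)| ∂μ := abs_integral_le_integral_abs
    _ ≤ ∫ z, K * |a - b| * |z| ∂μ := by
        refine integral_mono ((hint a).sub (hint b)).abs (hμ.abs.const_mul _) fun z => ?_
        simpa [Real.dist_eq, ← sub_mul, abs_mul, mul_assoc] using hh.dist_le_mul (a * z) (b * z)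
    _ = _ := by
        rw [integral_const_mul, NNReal.coe_mul,
          Real.coe_toNNReal _ (integral_nonneg fun _ => abs_nonneg _)]
        ring

end Lipschitz

namespace ProbabilityTheory

variable {Ω : Type*} [MeasurableSpace Ω] {P : Measure Ω}

lemma IndepFun.integral_comp_eq_integral_integral [IsFiniteMeasure P] {α β E : Type*}
    [MeasurableSpace α] [MeasurableSpace β] [NormedAddCommGroup E] [NormedSpace ℝ E]
    {X : Ω → α} {Y : Ω → β} (hXY : IndepFun X Y P) (hX : AEMeasurable X P)
    (hY : AEMeasurable Y P) {φ : α × β → E} (hφ : Integrable φ ((P.map X).prod (P.map Y))) :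
    ∫ ω, φ (X ω, Y ω) ∂P = ∫ ω, ∫ y, φ (X ω, y) ∂(P.map Y) ∂P := by
  have hmap := (indepFun_iff_map_prod_eq_prod_map_map hX hY).1 hXY
  calc ∫ ω, φ (X ω, Y ω) ∂P = ∫ p, φ p ∂(P.map fun ω => (X ω, Y ω)) :=
        (integral_map (hX.prodMk hY) (hmap ▸ hφ.1)).symm
    _ = ∫ p, φ p ∂((P.map X).prod (P.map Y)) := by rw [hmap]
    _ = ∫ x, ∫ y, φ (x, y) ∂(P.map Y) ∂(P.map X) := integral_prod φ hφ
    _ = ∫ ω, ∫ y, φ (X ω, y) ∂(P.map Y) ∂P :=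
        integral_map hX hφ.integral_prod_left.aestronglyMeasurable

lemma IndepFun.integral_comp_mul_eq_integral_integral [IsFiniteMeasure P] {X ζ : Ω → ℝ}
    {h : ℝ → ℝ} {K : ℝ≥0} (hXζ : IndepFun X ζ P) (hX : Integrable X P) (hζ : Integrable ζ P)
    (hh : LipschitzWith K h) :
    ∫ ω, h (X ω * ζ ω) ∂P = ∫ ω, ∫ z, h (X ω * z) ∂(P.map ζ) ∂P := by
  refine hXζ.integral_comp_eq_integral_integral (φ := fun p => h (p.1 * p.2)) hX.aemeasurable
    hζ.aemeasurable (hh.integrable_comp (Integrable.mul_prod (f := fun x => x) (g := fun z => z)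
      ?_ ?_))
  · exact (integrable_map_measure aestronglyMeasurable_id hX.aemeasurable).2 hX
  · exact (integrable_map_measure aestronglyMeasurable_id hζ.aemeasurable).2 hζ

end ProbabilityTheory

lemma abs_integral_sub_le_of_lipschitzWith {Ω : Type*} [MeasurableSpace Ω] {P : Measure Ω}
    {X Y : Ω → ℝ} {d : ℝ}
    (hd : ∀ g : ℝ → ℝ, LipschitzWith 1 g → |(∫ ω, g (X ω) ∂P) - ∫ ω, g (Y ω) ∂P| ≤ d)
    {G : ℝ → ℝ} {K : ℝ≥0} (hG : LipschitzWith K G) :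
    |(∫ ω, G (X ω) ∂P) - ∫ ω, G (Y ω) ∂P| ≤ K * d := by
  rcases eq_or_ne K 0 with rfl | hK
  · have hconst (x : ℝ) : G x = G 0 := by simpa using hG.dist_le_mul x 0
    simp [hconst]
  · have hKpos : (0 : ℝ) < K := NNReal.coe_pos.2 hK.bot_lt
    have hg : LipschitzWith 1 fun x => (K : ℝ)⁻¹ * G x := by
      have hK1 : ‖(K : ℝ)⁻¹‖₊ * K = 1 := by ext; simp [hK]
      exact hK1 ▸ (lipschitzWith_smul (K : ℝ)⁻¹).comp hG
    have hscaled := hd _ hg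
    rw [integral_const_mul, integral_const_mul, ← mul_sub, abs_mul,
      abs_of_pos (inv_pos.2 hKpos)] at hscaled
    exact (inv_mul_le_iff₀ hKpos).1 hscaled

theorem stmt_10_general {Ω : Type*} [MeasureSpace Ω] [IsProbabilityMeasure (ℙ : Measure Ω)]
    (U V ζ : Ω → ℝ)
    (hζmeas : Measurable ζ)
    (hζ : Measure.map ζ ℙ = gaussianReal 0 1)
    (hζU : IndepFun ζ U ℙ) (hζV : IndepFun ζ V ℙ)
    (hUint : Integrable (fun ω => Real.sqrt (U ω)) ℙ)
    (hVint : Integrable (fun ω => Real.sqrt (V ω)) ℙ)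
    (σ : ℝ) (hσ : 0 < σ)
    (d : ℝ)
    (hd : ∀ g : ℝ → ℝ, LipschitzWith 1 g →
      |(∫ ω, g (Real.sqrt (U ω)) ∂ℙ) - ∫ ω, g (Real.sqrt (V ω)) ∂ℙ| ≤ d) :
    ∀ h : ℝ → ℝ, LipschitzWith 1 h →
      |(∫ ω, h (σ * Real.sqrt (U ω) * ζ ω) ∂ℙ) -
          ∫ ω, h (σ * Real.sqrt (V ω) * ζ ω) ∂ℙ| ≤
        σ * Real.sqrt (2 / Real.pi) * d := by
  intro h hh
  have hγ : Integrable id (gaussianReal 0 1) := (memLp_id_gaussianReal 1).integrable le_rfl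
  have hζint : Integrable ζ ℙ := (hζ ▸ hγ).comp_measurable hζmeas
  set G : ℝ → ℝ := fun u => ∫ z, h (u * z) ∂gaussianReal 0 1
  have hG : LipschitzWith (√(2 / π)).toNNReal G := by
    simpa [integral_abs_gaussianReal] using hh.integral_comp_mul hγ
  have hsmooth {W : Ω → ℝ} (hind : IndepFun ζ W ℙ) (hW : Integrable (fun ω => √(W ω)) ℙ) :
      ∫ ω, h (σ * √(W ω) * ζ ω) ∂ℙ = ∫ ω, G (σ * √(W ω)) ∂ℙ := by
    simp only [G, ← hζ]
    exact (hind.comp measurable_id (measurable_const.mul continuous_sqrt.measurable :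
      Measurable fun w => σ * √w)).symm.integral_comp_mul_eq_integral_integral
      (hW.const_mul σ) hζint hh
  rw [hsmooth hζU hUint, hsmooth hζV hVint]
  refine (abs_integral_sub_le_of_lipschitzWith hd (hG.comp (lipschitzWith_smul σ))).trans_eq ?_
  rw [NNReal.coe_mul, Real.coe_toNNReal _ (sqrt_nonneg _), coe_nnnorm, Real.norm_of_nonneg hσ.le]
  ring

/-- For nonnegative random variables `U`, `V`, `σ > 0` and a standard normal `ζ`
independent of each of them: if `d` bounds the Wasserstein distance between the laws
of `√U` and `√V` (i.e. `|E h(√U) - E h(√V)| ≤ d` for every 1-Lipschitz `h`),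
then the Wasserstein distance between the laws of `σ√U ζ` and `σ√V ζ` is at most
`σ √(2/π) d`. -/
theorem stmt_10 {Ω : Type*} [MeasureSpace Ω] [IsProbabilityMeasure (ℙ : Measure Ω)]
    (U V ζ : Ω → ℝ) (hUmeas : Measurable U) (hVmeas : Measurable V)
    (hζmeas : Measurable ζ)
    (hU : ∀ ω, 0 ≤ U ω) (hV : ∀ ω, 0 ≤ V ω)
    (hζ : Measure.map ζ ℙ = gaussianReal 0 1)
    (hζU : IndepFun ζ U ℙ) (hζV : IndepFun ζ V ℙ)
    (hUint : Integrable (fun ω => Real.sqrt (U ω)) ℙ)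
    (hVint : Integrable (fun ω => Real.sqrt (V ω)) ℙ)
    (σ : ℝ) (hσ : 0 < σ)
    (d : ℝ)
    (hd : ∀ g : ℝ → ℝ, LipschitzWith 1 g →
      |(∫ ω, g (Real.sqrt (U ω)) ∂ℙ) - ∫ ω, g (Real.sqrt (V ω)) ∂ℙ| ≤ d) :
    ∀ h : ℝ → ℝ, LipschitzWith 1 h →
      |(∫ ω, h (σ * Real.sqrt (U ω) * ζ ω) ∂ℙ) -
          ∫ ω, h (σ * Real.sqrt (V ω) * ζ ω) ∂ℙ| ≤
        σ * Real.sqrt (2 / Real.pi) * d :=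
  stmt_10_general U V ζ hζmeas hζ hζU hζV hUint hVint σ hσ d hd
end

section
/- Let N_λ be Poisson with parameter λ > 0 and ζ ~ N(0,1) independent of N_λ. Then for σ > 0, the Wasserstein distance between the law of σ√(N_λ/λ)·ζ and N(0,σ²) is at most σ√(2/π)/√λ. -/
/-!
Both `σ √(N/λ) ζ` and `σ ζ ~ N(0, σ²)` are built from the same `ζ`, so for a 1-Lipschitz `h`
the two expectations differ by at most `σ E|√(N/λ) - 1| E|ζ|`, where independence splits the
expectation and `E|ζ| = √(2/π)`. Since `|√t - 1| ≤ |t - 1|`, we get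
`E|√(N/λ) - 1| ≤ E|N - λ| / λ ≤ √(Var N) / λ`, which is `1 / √λ` for a Poisson variable.
-/

open MeasureTheory ProbabilityTheory Real
open scoped NNReal Nat

lemma abs_sqrt_sub_one_le (t : ℝ) : |√t - 1| ≤ |t - 1| := by
  rcases le_total t 0 with ht | ht
  · rw [sqrt_eq_zero'.mpr ht, abs_of_nonpos (by linarith : t - 1 ≤ 0)]
    norm_num
    linarith
  · have hfactor : t - 1 = (√t - 1) * (√t + 1) := by linear_combination (sq_sqrt ht).symm
    rw [hfactor, abs_mul, abs_of_nonneg (by positivity : 0 ≤ √t + 1)]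
    nlinarith [abs_nonneg (√t - 1), sqrt_nonneg t]

lemma sqrt_le_one_add_abs (t : ℝ) : √t ≤ 1 + |t| := by
  rcases le_total t 0 with ht | ht
  · rw [sqrt_eq_zero'.mpr ht]
    positivity
  · nlinarith [sq_sqrt ht, sq_nonneg (√t - 1), le_abs_self t]

lemma integral_Ioi_mul_exp_neg_sq_div_two :
    ∫ x in Set.Ioi (0 : ℝ), x * exp (-(x ^ 2 / 2)) = 1 := by
  have h := integral_rpow_mul_exp_neg_mul_rpow (p := 2) (q := 1) (b := 1 / 2) two_pos
    (by norm_num) (by norm_num)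
  simp only [rpow_one, rpow_two] at h
  convert h using 3 with x
  · ring_nf
  · norm_num

section Integrability

variable {Ω : Type*} {mΩ : MeasurableSpace Ω} {P : Measure Ω} [IsFiniteMeasure P]

lemma MeasureTheory.Integrable.sqrt {X : Ω → ℝ} (hX : Integrable X P) :
    Integrable (fun ω ↦ √(X ω)) P := by
  refine ((integrable_const 1).add hX.abs).mono'
    (continuous_sqrt.comp_aestronglyMeasurable hX.1) (ae_of_all _ fun ω ↦ ?_)
  rw [norm_of_nonneg (sqrt_nonneg _)]
  exact sqrt_le_one_add_abs (X ω)

variable {E F : Type*} [NormedAddCommGroup E] [NormedAddCommGroup F] {K : ℝ≥0} {h : E → F}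

lemma LipschitzWith.integrable_comp_s17 (hh : LipschitzWith K h) {X : Ω → E} (hX : Integrable X P) :
    Integrable (fun ω ↦ h (X ω)) P := by
  refine ((integrable_const ‖h 0‖).add (hX.norm.const_mul K)).mono'
    (hh.continuous.comp_aestronglyMeasurable hX.1) (ae_of_all _ fun ω ↦ ?_)
  have hlip := hh.norm_sub_le (X ω) 0
  rw [sub_zero] at hlip
  have := norm_le_insert' (h (X ω)) (h 0)
  simp only [Pi.add_apply]
  linarith

lemma LipschitzWith.norm_integral_comp_sub_le [NormedSpace ℝ F] (hh : LipschitzWith K h)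
    {X Y : Ω → E} (hX : Integrable X P) (hY : Integrable Y P) :
    ‖∫ ω, h (X ω) ∂P - ∫ ω, h (Y ω) ∂P‖ ≤ K * ∫ ω, ‖X ω - Y ω‖ ∂P := by
  rw [← integral_sub (hh.integrable_comp_s17 hX) (hh.integrable_comp_s17 hY), ← integral_const_mul]
  exact (norm_integral_le_integral_norm _).trans
    (integral_mono_of_nonneg (ae_of_all _ fun _ ↦ norm_nonneg _)
      ((hX.sub hY).norm.const_mul _) (ae_of_all _ fun ω ↦ hh.norm_sub_le _ _))

end Integrability

namespace ProbabilityTheory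

variable {Ω : Type*} {mΩ : MeasurableSpace Ω} {P : Measure Ω}

section Deviation

variable [IsProbabilityMeasure P] {X : Ω → ℝ}

lemma integral_abs_sub_integral_le_sqrt_variance (hX : MemLp X 2 P) :
    ∫ ω, |X ω - P[X]| ∂P ≤ √(Var[X; P]) := by
  have hY : MemLp (fun ω ↦ |X ω - P[X]|) 2 P := (hX.sub (memLp_const _)).abs
  have h := variance_nonneg (fun ω ↦ |X ω - P[X]|) P
  rw [variance_eq_sub hY] at h
  rw [variance_eq_integral hX.aemeasurable]
  refine le_sqrt_of_sq_le ?_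
  simpa [sq_abs] using h

lemma integral_abs_sqrt_div_integral_sub_one_le (hX : MemLp X 2 P) (hm : 0 < P[X]) :
    ∫ ω, |√(X ω / P[X]) - 1| ∂P ≤ √(Var[X; P]) / P[X] :=
  calc ∫ ω, |√(X ω / P[X]) - 1| ∂P ≤ ∫ ω, |X ω - P[X]| / P[X] ∂P := by
        refine integral_mono_of_nonneg (ae_of_all _ fun _ ↦ abs_nonneg _)
          (((hX.integrable one_le_two).sub (integrable_const _)).abs.div_const _)
          (ae_of_all _ fun ω ↦ ?_)
        have := abs_sqrt_sub_one_le (X ω / P[X])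
        rwa [div_sub_one hm.ne', abs_div, abs_of_pos hm] at this
    _ = (∫ ω, |X ω - P[X]| ∂P) / P[X] := integral_div _ _
    _ ≤ √(Var[X; P]) / P[X] := by
        gcongr
        exact integral_abs_sub_integral_le_sqrt_variance hX

end Deviation

section Poisson

variable (r : ℝ≥0)

lemma poisson_weight_succ_mul (n : ℕ) :
    exp (-r) * r ^ (n + 1) / (n + 1)! * (n + 1 : ℕ) = r * (exp (-r) * r ^ n / n !) := by
  rw [Nat.factorial_succ]
  push_cast
  field_simp
  ring

lemma hasSum_poisson_weight_mul_natCast_mul {g : ℕ → ℝ} {s : ℝ}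
    (h : HasSum (fun n ↦ exp (-r) * r ^ n / n ! * g (n + 1)) s) :
    HasSum (fun n ↦ exp (-r) * r ^ n / n ! * (n * g n)) (r * s) := by
  have hshift : (fun n : ℕ ↦ exp (-r) * r ^ (n + 1) / (n + 1)! * ((n + 1 : ℕ) * g (n + 1))) =
      fun n ↦ r * (exp (-r) * r ^ n / n ! * g (n + 1)) := by
    funext n
    rw [← mul_assoc, poisson_weight_succ_mul, mul_assoc]
  refine (hasSum_nat_add_iff' 1).mp ?_
  simp only [Finset.sum_range_one, CharP.cast_eq_zero, zero_mul, mul_zero, sub_zero]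
  exact hshift ▸ h.mul_left (r : ℝ)

lemma hasSum_poisson_weight_mul_natCast :
    HasSum (fun n ↦ exp (-r) * r ^ n / n ! * n) r := by
  have h := hasSum_poisson_weight_mul_natCast_mul r (g := 1)
    (by simpa using hasSum_one_poissonMeasure r)
  simpa only [Pi.one_apply, mul_one] using h

lemma hasSum_poisson_weight_mul_natCast_sq :
    HasSum (fun n ↦ exp (-r) * r ^ n / n ! * (n : ℝ) ^ 2) (r ^ 2 + r) := by
  have h := hasSum_poisson_weight_mul_natCast_mul r (g := fun n ↦ (n : ℝ)) (s := r + 1) (by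
    simpa [mul_add] using (hasSum_poisson_weight_mul_natCast r).add (hasSum_one_poissonMeasure r))
  convert h using 1
  · simp [sq]
  · ring

lemma integral_natCast_poissonMeasure : ∫ n, (n : ℝ) ∂Po(r) = r := by
  simpa [integral_poissonMeasure] using (hasSum_poisson_weight_mul_natCast r).tsum_eq

lemma memLp_natCast_poissonMeasure : MemLp (fun n : ℕ ↦ (n : ℝ)) 2 Po(r) := by
  rw [memLp_two_iff_integrable_sq (by fun_prop), integrable_poissonMeasure_iff]
  simpa using (hasSum_poisson_weight_mul_natCast_sq r).summable

lemma variance_natCast_poissonMeasure : Var[fun n : ℕ ↦ (n : ℝ); Po(r)] = r := by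
  rw [variance_eq_sub (memLp_natCast_poissonMeasure r), integral_natCast_poissonMeasure]
  simp only [Pi.pow_apply, integral_poissonMeasure, smul_eq_mul,
    (hasSum_poisson_weight_mul_natCast_sq r).tsum_eq]
  ring

variable {r} {N : Ω → ℕ}

lemma hasLaw_poissonMeasure_of_measureReal_eq [IsFiniteMeasure P] (hN : Measurable N)
    (h : ∀ n, P.real {ω | N ω = n} = exp (-r) * r ^ n / n !) : HasLaw N Po(r) P where
  aemeasurable := hN.aemeasurable
  map_eq := by
    refine Measure.ext_of_singleton fun n ↦ ?_
    rw [Measure.map_apply hN (measurableSet_singleton n), poissonMeasure_singleton, ← h n,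
      measureReal_def, ENNReal.ofReal_toReal (measure_ne_top _ _)]
    rfl

lemma HasLaw.memLp_natCast_poissonMeasure (hN : HasLaw N Po(r) P) :
    MemLp (fun ω ↦ (N ω : ℝ)) 2 P := by
  have h := ProbabilityTheory.memLp_natCast_poissonMeasure r
  rwa [← hN.map_eq, memLp_map_measure_iff (by fun_prop) hN.aemeasurable] at h

lemma HasLaw.integral_abs_sqrt_div_sub_one_le_poissonMeasure (hN : HasLaw N Po(r) P)
    (hr : 0 < r) : ∫ ω, |√(N ω / r) - 1| ∂P ≤ 1 / √r := by
  have : IsProbabilityMeasure P := hN.isProbabilityMeasure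
  have hmean : P[fun ω ↦ (N ω : ℝ)] = (r : ℝ) :=
    (hN.integral_comp (f := fun n : ℕ ↦ (n : ℝ)) (by fun_prop)).trans
      (integral_natCast_poissonMeasure r)
  have hvar : Var[fun ω ↦ (N ω : ℝ); P] = (r : ℝ) := by
    rw [← variance_natCast_poissonMeasure r, ← hN.map_eq,
      variance_map (X := fun n : ℕ ↦ (n : ℝ)) (by fun_prop) hN.aemeasurable]
    rfl
  have h := integral_abs_sqrt_div_integral_sub_one_le hN.memLp_natCast_poissonMeasure
    (hmean ▸ hr)
  rwa [hmean, hvar, sqrt_div_self'] at h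

end Poisson

section Gaussian

lemma integral_abs_gaussianReal : ∫ x, |x| ∂gaussianReal 0 1 = √(2 / π) := by
  have hpdf (x : ℝ) :
      gaussianPDFReal 0 1 x • |x| = (√(2 * π))⁻¹ * (|x| * exp (-(|x| ^ 2 / 2))) := by
    simp only [gaussianPDFReal_def, NNReal.coe_one, mul_one, sqrt_mul zero_le_two, mul_inv_rev,
      sub_zero, neg_div, smul_eq_mul, sq_abs]
    ring
  have hπ : 0 < π := pi_pos
  simp_rw [integral_gaussianReal_eq_integral_smul one_ne_zero, hpdf]
  rw [integral_const_mul, integral_comp_abs (f := fun x ↦ x * exp (-(x ^ 2 / 2))),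
    integral_Ioi_mul_exp_neg_sq_div_two, sqrt_div' _ hπ.le, sqrt_mul' _ hπ.le]
  field_simp
  rw [sq_sqrt zero_le_two]

lemma hasLaw_const_mul_gaussianReal (σ : ℝ) :
    HasLaw (σ * ·) (gaussianReal 0 ⟨σ ^ 2, sq_nonneg σ⟩) (gaussianReal 0 1) where
  map_eq := by
    rw [gaussianReal_map_const_mul, mul_zero, mul_one]
    rfl

lemma abs_integral_comp_mul_sub_integral_gaussianReal_le [IsProbabilityMeasure P] {K : ℝ≥0}
    {h : ℝ → ℝ} (hh : LipschitzWith K h) {V ζ : Ω → ℝ} (hV : Integrable V P)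
    (hζ : HasLaw ζ (gaussianReal 0 1) P) (hVζ : IndepFun V ζ P) (σ : ℝ) :
    |∫ ω, h (σ * V ω * ζ ω) ∂P - ∫ x, h x ∂gaussianReal 0 ⟨σ ^ 2, sq_nonneg σ⟩| ≤
      K * |σ| * √(2 / π) * ∫ ω, |V ω - 1| ∂P := by
  have hζint : Integrable ζ P := hζ.hasGaussianLaw.integrable
  have hζabs : ∫ ω, |ζ ω| ∂P = √(2 / π) := by
    rw [← integral_abs_gaussianReal]
    exact hζ.integral_comp (f := fun x ↦ |x|) (by fun_prop)
  have hind : IndepFun (fun ω ↦ |V ω - 1|) (fun ω ↦ |ζ ω|) P :=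
    hVζ.comp (by fun_prop : Measurable fun v : ℝ ↦ |v - 1|) measurable_abs
  have hgauss : ∫ x, h x ∂gaussianReal 0 ⟨σ ^ 2, sq_nonneg σ⟩ = ∫ ω, h (σ * ζ ω) ∂P :=
    (((hasLaw_const_mul_gaussianReal σ).comp hζ).integral_comp
      hh.continuous.aestronglyMeasurable).symm
  have hσVζ : Integrable (fun ω ↦ σ * V ω * ζ ω) P := by
    simpa only [Pi.mul_apply, mul_assoc] using (hVζ.integrable_mul hV hζint).const_mul σ
  rw [hgauss]
  calc _ ≤ K * ∫ ω, |σ * V ω * ζ ω - σ * ζ ω| ∂P := by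
        simpa only [Real.norm_eq_abs] using hh.norm_integral_comp_sub_le hσVζ (hζint.const_mul σ)
    _ = K * (|σ| * ((∫ ω, |V ω - 1| ∂P) * ∫ ω, |ζ ω| ∂P)) := by
        rw [← hind.integral_fun_mul_eq_mul_integral (by fun_prop) (by fun_prop),
          ← integral_const_mul |σ|]
        congr 1
        refine integral_congr_ae (ae_of_all _ fun ω ↦ ?_)
        simp only [← abs_mul]
        ring_nf
    _ = K * |σ| * √(2 / π) * ∫ ω, |V ω - 1| ∂P := by
        rw [hζabs]
        ring

end Gaussian

end ProbabilityTheory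

/-- If `N_λ ~ Poi(λ)` with `λ > 0` and `ζ ~ N(0,1)` is independent of `N_λ`, then for
`σ > 0` the Wasserstein distance between the law of `σ√(N_λ/λ) ζ` and `N(0,σ²)` is at
most `σ √(2/π) / √λ`. -/
theorem stmt_17 {Ω : Type*} [MeasureSpace Ω] [IsProbabilityMeasure (ℙ : Measure Ω)]
    (lam : ℝ) (hlam : 0 < lam)
    (N : Ω → ℕ) (ζ : Ω → ℝ) (hNmeas : Measurable N) (hζmeas : Measurable ζ)
    (hN : ∀ n : ℕ, (ℙ {ω | N ω = n}).toReal = Real.exp (-lam) * lam ^ n / n.factorial)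
    (hζ : Measure.map ζ ℙ = gaussianReal 0 1)
    (hindep : IndepFun N ζ ℙ)
    (σ : ℝ) (hσ : 0 < σ) :
    ∀ h : ℝ → ℝ, LipschitzWith 1 h →
      |(∫ ω, h (σ * Real.sqrt ((N ω : ℝ) / lam) * ζ ω) ∂ℙ) -
          ∫ x, h x ∂(gaussianReal 0 ⟨σ ^ 2, sq_nonneg σ⟩)| ≤
        σ * Real.sqrt (2 / Real.pi) / Real.sqrt lam := by
  intro h hh
  have hNlaw : HasLaw N Po(⟨lam, hlam.le⟩) ℙ := hasLaw_poissonMeasure_of_measureReal_eq hNmeas hN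
  have hmix := abs_integral_comp_mul_sub_integral_gaussianReal_le hh
    ((hNlaw.memLp_natCast_poissonMeasure.integrable one_le_two).div_const lam).sqrt
    ⟨hζmeas.aemeasurable, hζ⟩
    (hindep.comp (by fun_prop : Measurable fun n : ℕ ↦ √(n / lam)) measurable_id) σ
  rw [NNReal.coe_one, one_mul, abs_of_pos hσ] at hmix
  calc _ ≤ σ * √(2 / π) * (1 / √lam) :=
        hmix.trans (by gcongr; exact hNlaw.integral_abs_sqrt_div_sub_one_le_poissonMeasure hlam)
    _ = σ * √(2 / π) / √lam := mul_one_div _ _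
end
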